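/- arXiv:1811.08736 — 2 statements merged into one kernel-verified Lean document; each statement's English description precedes it below -/
import Mathlib

section
/- For every 0<p<∞ there exists a function A analytic in the open unit disc 𝔻 with sup_{z∈𝔻} |A(z)|(1-|z|²)² = ∞ such that every solution of f'' + A f = 0 satisfies sup_{z∈𝔻} |f(z)|(1-|z|²)^p < ∞, while some non-trivial solution f is non-normal, i.e. sup_{z∈𝔻} (|f'(z)|/(1+|f(z)|²))(1-|z|²) = ∞. -/
open Complex MeasureTheory Metric Set
open scoped BigOperators

noncomputable section

/-- The open unit disc in ℂ. -/
def oDisc : Set ℂ := {z : ℂ | ‖z‖ < 1}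

/-- `f` is an analytic solution of `f'' + A f = 0` on the unit disc. -/
def IsSolution (A f : ℂ → ℂ) : Prop :=
  DifferentiableOn ℂ f oDisc ∧ ∀ z ∈ oDisc, deriv (deriv f) z + A z * f z = 0

/-- `f₁, f₂` are linearly independent as functions on the unit disc. -/
def LinIndep (f₁ f₂ : ℂ → ℂ) : Prop :=
  ∀ a b : ℂ, (∀ z ∈ oDisc, a * f₁ z + b * f₂ z = 0) → a = 0 ∧ b = 0

/-- The (pointwise) Wronskian `W(f₁,f₂) = f₁ f₂' - f₁' f₂`. -/
def Wr (f₁ f₂ : ℂ → ℂ) (z : ℂ) : ℂ := f₁ z * deriv f₂ z - deriv f₁ z * f₂ z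

/-- `w(z) dm(z)` (on the unit disc) is a Carleson measure. -/
def IsCarleson (w : ℂ → ℝ) : Prop :=
  ∃ C : ℝ, ∀ a ∈ oDisc,
    (∫⁻ z in oDisc,
      ENNReal.ofReal (w z * ((1 - ‖a‖ ^ 2) / ‖1 - (starRingEnd ℂ) a * z‖ ^ 2)))
      ≤ ENNReal.ofReal C

/-- A sequence in the unit disc is uniformly separated. -/
def UniformlySeparated (z : ℕ → ℂ) : Prop :=
  ∃ δ : ℝ, 0 < δ ∧ ∀ n : ℕ, ∀ F : Finset ℕ, n ∉ F →
    δ ≤ ∏ k ∈ F, ‖(z k - z n) / (1 - (starRingEnd ℂ) (z k) * z n)‖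

/-- Harmonic on the unit disc (equivalently, real part of an analytic function). -/
def HarmonicOnDisc (h : ℂ → ℝ) : Prop :=
  ∃ g : ℂ → ℂ, DifferentiableOn ℂ g oDisc ∧ ∀ z ∈ oDisc, h z = (g z).re

/-- Positive harmonic function on the unit disc. -/
def PosHarmonic (h : ℂ → ℝ) : Prop :=
  HarmonicOnDisc h ∧ ∀ z ∈ oDisc, 0 < h z

/-- Pseudo-hyperbolic disc of radius δ centred at a. -/
def pDisc (a : ℂ) (δ : ℝ) : Set ℂ :=
  {w ∈ oDisc | ‖(w - a) / (1 - (starRingEnd ℂ) a * w)‖ < δ}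

/-- The Laplacian Δu = ∂²u/∂x² + ∂²u/∂y² of a real-valued function on ℂ ≅ ℝ². -/
def lapl (u : ℂ → ℝ) (z : ℂ) : ℝ :=
  fderiv ℝ (fun w => fderiv ℝ u w 1) z 1
    + fderiv ℝ (fun w => fderiv ℝ u w Complex.I) z Complex.I

/-- |∇u|² = (∂u/∂x)² + (∂u/∂y)². -/
def gradSq (u : ℂ → ℝ) (z : ℂ) : ℝ :=
  (fderiv ℝ u z 1) ^ 2 + (fderiv ℝ u z Complex.I) ^ 2

/-- The Wirtinger derivative ∂ = (1/2)(∂/∂x - i ∂/∂y). -/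
def wirt (g : ℂ → ℂ) (z : ℂ) : ℂ :=
  (1 / 2 : ℂ) * (fderiv ℝ g z 1 - Complex.I * fderiv ℝ g z Complex.I)

/-- The auxiliary function u = log((|f₁|²+|f₂|²)/|W(f₁,f₂)|) = -log (f₁/f₂)^#. -/
def uAux (f₁ f₂ : ℂ → ℂ) (z : ℂ) : ℝ :=
  Real.log ((‖f₁ z‖ ^ 2 + ‖f₂ z‖ ^ 2) / ‖Wr f₁ f₂ z‖)

/-- The conformal automorphism φ_a(z) = (a-z)/(1-conj(a) z). -/
def moebius (a z : ℂ) : ℂ := (a - z) / (1 - (starRingEnd ℂ) a * z)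

/-- A single Blaschke factor. -/
def blaschkeFactor (a z : ℂ) : ℂ :=
  if a = 0 then z else ((‖a‖ : ℂ) / a) * ((a - z) / (1 - (starRingEnd ℂ) a * z))

/-- The Blaschke product with zeros `zs`. -/
def blaschkeProd (zs : ℕ → ℂ) (z : ℂ) : ℂ := ∏' n, blaschkeFactor (zs n) z

/-- `f` is bounded on the unit disc. -/
def BoundedOnDisc (f : ℂ → ℂ) : Prop := ∃ M : ℝ, ∀ z ∈ oDisc, ‖f z‖ ≤ M

namespace S1
def L (z : ℂ) : ℂ := Complex.log (1 - z)
def G (e : ℝ) (z : ℂ) : ℂ := -2 * Complex.I * e * L z / (1 - z)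
def g (e : ℝ) (z : ℂ) : ℂ := Complex.I * e * (L z)^2
def f1 (e : ℝ) (z : ℂ) : ℂ := Complex.exp (g e z)
def Af (e : ℝ) (z : ℂ) : ℂ := (2 * Complex.I * e * (L z - 1) + 4 * e^2 * (L z)^2) / (1 - z)^2

lemma oDisc_open : IsOpen oDisc := isOpen_lt continuous_norm continuous_const

lemma one_sub_ne (z : ℂ) (hz : z ∈ oDisc) : (1 : ℂ) - z ≠ 0 := by
  intro h
  have h1 : z = 1 := by linear_combination -h
  simp [oDisc, h1] at hz

lemma one_sub_slit (z : ℂ) (hz : z ∈ oDisc) : (1 : ℂ) - z ∈ Complex.slitPlane := by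
  rw [Complex.mem_slitPlane_iff]
  left
  have : z.re ≤ ‖z‖ := by
    calc z.re ≤ |z.re| := le_abs_self _
    _ ≤ ‖z‖ := Complex.abs_re_le_norm z
    _ = ‖z‖ := rfl
  have hz' : ‖z‖ < 1 := hz
  simp only [Complex.sub_re, Complex.one_re]
  linarith

lemma hasDerivAt_L (z : ℂ) (hz : z ∈ oDisc) :
    HasDerivAt L (-(1 - z)⁻¹) z := by
  have h1 : HasDerivAt (fun w : ℂ => 1 - w) (-1) z := (hasDerivAt_id z).const_sub 1
  have h2 := (Complex.hasDerivAt_log (one_sub_slit z hz)).comp z h1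
  refine h2.congr_deriv (Eq.symm ?_)
  ring

lemma hasDerivAt_g (e : ℝ) (z : ℂ) (hz : z ∈ oDisc) :
    HasDerivAt (g e) (G e z) z := by
  have h := ((hasDerivAt_L z hz).pow 2).const_mul (Complex.I * e)
  have h0 := one_sub_ne z hz
  refine h.congr_deriv (Eq.symm ?_)
  rw [G, div_eq_iff h0]
  field_simp
  simp only [show (2:ℕ) - 1 = 1 from rfl, pow_one, Nat.cast_ofNat]
  ring

lemma hasDerivAt_f1 (e : ℝ) (z : ℂ) (hz : z ∈ oDisc) :
    HasDerivAt (f1 e) (G e z * f1 e z) z := by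
  have h := (hasDerivAt_g e z hz).cexp
  refine h.congr_deriv (Eq.symm ?_)
  rw [mul_comm]
  rfl

lemma hasDerivAt_G (e : ℝ) (z : ℂ) (hz : z ∈ oDisc) :
    HasDerivAt (G e) (-2 * Complex.I * e * (L z - 1) / (1 - z)^2) z := by
  have hn : HasDerivAt (fun w => -2 * Complex.I * (e:ℂ) * L w) (-2 * Complex.I * e * (-(1 - z)⁻¹)) z :=
    (hasDerivAt_L z hz).const_mul _
  have hd : HasDerivAt (fun w : ℂ => 1 - w) (-1) z := (hasDerivAt_id z).const_sub 1
  have h := hn.div hd (one_sub_ne z hz)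
  have h0 := one_sub_ne z hz
  refine h.congr_deriv (Eq.symm ?_)
  rw [div_eq_div_iff (pow_ne_zero 2 h0) (pow_ne_zero 2 h0)]
  field_simp
  ring

lemma deriv_f1 (e : ℝ) (z : ℂ) (hz : z ∈ oDisc) :
    deriv (f1 e) z = G e z * f1 e z := (hasDerivAt_f1 e z hz).deriv

end S1

namespace S1

lemma key_alg (e : ℝ) (z : ℂ) (hz : z ∈ oDisc) :
    -2 * Complex.I * e * (L z - 1) / (1 - z)^2 + (G e z)^2 = -Af e z := by
  have h0 := one_sub_ne z hz
  rw [G, Af, div_pow, div_add_div _ _ (pow_ne_zero 2 h0) (pow_ne_zero 2 h0), ← neg_div,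
    div_eq_div_iff (mul_ne_zero (pow_ne_zero 2 h0) (pow_ne_zero 2 h0)) (pow_ne_zero 2 h0)]
  have hI : Complex.I ^ 2 = -1 := Complex.I_sq
  linear_combination ((1-z)^2 * (4 * (e:ℂ)^2 * (L z)^2 * (1-z)^2)) * hI

lemma hasDerivAt_Gf1 (e : ℝ) (z : ℂ) (hz : z ∈ oDisc) :
    HasDerivAt (fun w => G e w * f1 e w) (-Af e z * f1 e z) z := by
  have h := (hasDerivAt_G e z hz).mul (hasDerivAt_f1 e z hz)
  refine h.congr_deriv (Eq.symm ?_)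
  rw [← key_alg e z hz]
  ring

lemma deriv_deriv_f1 (e : ℝ) (z : ℂ) (hz : z ∈ oDisc) :
    deriv (deriv (f1 e)) z = -Af e z * f1 e z := by
  have heq : deriv (f1 e) =ᶠ[nhds z] fun w => G e w * f1 e w :=
    Filter.eventually_of_mem (oDisc_open.mem_nhds hz) (fun w hw => deriv_f1 e w hw)
  rw [heq.deriv_eq]
  exact (hasDerivAt_Gf1 e z hz).deriv

lemma sol_f1 (e : ℝ) : IsSolution (Af e) (f1 e) := by
  constructor
  · exact fun z hz => (hasDerivAt_f1 e z hz).differentiableAt.differentiableWithinAt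
  · intro z hz
    rw [deriv_deriv_f1 e z hz]
    ring

lemma diffOn_Af (e : ℝ) : DifferentiableOn ℂ (Af e) oDisc := by
  intro z hz
  have hL : DifferentiableAt ℂ L z := (hasDerivAt_L z hz).differentiableAt
  have hnum : DifferentiableAt ℂ (fun w => 2 * Complex.I * (e:ℂ) * (L w - 1) + 4 * (e:ℂ)^2 * (L w)^2) z := by
    fun_prop
  have hden : DifferentiableAt ℂ (fun w : ℂ => (1 - w)^2) z := by fun_prop
  exact (hnum.div hden (pow_ne_zero 2 (one_sub_ne z hz))).differentiableWithinAt

end S1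

namespace S1
open Real

lemma s_pos (z : ℂ) (hz : z ∈ oDisc) : 0 < 1 - ‖z‖ := by
  have : ‖z‖ < 1 := hz
  linarith

lemma base_ge_two (z : ℂ) (hz : z ∈ oDisc) : 2 ≤ 2 / (1 - ‖z‖) := by
  have h := s_pos z hz
  rw [le_div_iff₀ h]
  nlinarith [norm_nonneg z]

lemma abs_log_abs_le (z : ℂ) (hz : z ∈ oDisc) :
    |Real.log ‖1 - z‖| ≤ Real.log (2 / (1 - ‖z‖)) := by
  have hs := s_pos z hz
  have habs_pos : 0 < ‖(1:ℂ) - z‖ := by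
    rw [norm_pos_iff]; exact one_sub_ne z hz
  have hup : ‖(1:ℂ) - z‖ ≤ 2 := by
    calc ‖(1:ℂ) - z‖ ≤ ‖(1:ℂ)‖ + ‖z‖ := norm_sub_le 1 z
      _ ≤ 2 := by have : ‖z‖ < 1 := hz; simp only [norm_one]; linarith
  have hlow : 1 - ‖z‖ ≤ ‖(1:ℂ) - z‖ := by
    have h1 : ‖(1:ℂ)‖ - ‖z‖ ≤ ‖(1:ℂ) - z‖ := norm_sub_norm_le 1 z
    simpa using h1
  rw [abs_le]
  constructor
  · rw [neg_le, ← Real.log_inv]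
    apply Real.log_le_log (inv_pos.mpr habs_pos)
    calc ‖(1:ℂ) - z‖⁻¹ ≤ (1 - ‖z‖)⁻¹ := inv_anti₀ hs hlow
      _ ≤ 2 / (1 - ‖z‖) := by rw [inv_eq_one_div]; gcongr; norm_num
  · apply Real.log_le_log habs_pos
    calc ‖(1:ℂ) - z‖ ≤ 2 := hup
      _ ≤ 2 / (1 - ‖z‖) := base_ge_two z hz

end S1

namespace S1
open Real

lemma norm_exp_le (e c : ℝ) (hc : |c| ≤ e) (z : ℂ) (hz : z ∈ oDisc) :
    ‖Complex.exp (Complex.I * (c:ℂ) * (L z)^2)‖ ≤ (2 / (1 - ‖z‖)) ^ (2*e*π) := by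
  have hs := s_pos z hz
  have hlog_nonneg : 0 ≤ Real.log (2 / (1 - ‖z‖)) :=
    Real.log_nonneg (by linarith [base_ge_two z hz])
  have hre : (Complex.I * (c:ℂ) * (L z)^2).re = -(c * (2 * (L z).re * (L z).im)) := by
    simp only [pow_two, Complex.mul_re, Complex.mul_im, Complex.I_re, Complex.I_im,
      Complex.ofReal_re, Complex.ofReal_im]
    ring
  have him : |(L z).im| ≤ π := by
    rw [L, Complex.log_im]
    exact Complex.abs_arg_le_pi _
  have hreL : |(L z).re| ≤ Real.log (2 / (1 - ‖z‖)) := by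
    rw [L, Complex.log_re]
    exact abs_log_abs_le z hz
  have he : 0 ≤ e := (abs_nonneg c).trans hc
  have hbound : (Complex.I * (c:ℂ) * (L z)^2).re ≤ 2 * e * π * Real.log (2 / (1 - ‖z‖)) := by
    rw [hre]
    calc -(c * (2 * (L z).re * (L z).im)) ≤ |c * (2 * (L z).re * (L z).im)| := neg_le_abs _
      _ = |c| * (2 * |(L z).re| * |(L z).im|) := by
          rw [abs_mul, abs_mul, abs_mul]; norm_num
      _ ≤ e * (2 * Real.log (2 / (1 - ‖z‖)) * π) := by
          have h1 : 0 ≤ |(L z).im| := abs_nonneg _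
          have h2 : 0 ≤ |(L z).re| := abs_nonneg _
          have hpi : (0:ℝ) < π := Real.pi_pos
          have he' : 0 ≤ e := (abs_nonneg c).trans hc
          nlinarith [mul_le_mul hreL him h1 hlog_nonneg, abs_nonneg c,
            mul_le_mul hc (le_refl (2 * |(L z).re| * |(L z).im|)) (by positivity) he']
      _ = 2 * e * π * Real.log (2 / (1 - ‖z‖)) := by ring
  calc ‖Complex.exp (Complex.I * (c:ℂ) * (L z)^2)‖
      = Real.exp ((Complex.I * (c:ℂ) * (L z)^2).re) := by
        rw [Complex.norm_exp]
    _ ≤ Real.exp (2 * e * π * Real.log (2 / (1 - ‖z‖))) := Real.exp_le_exp.mpr hbound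
    _ = (2 / (1 - ‖z‖)) ^ (2*e*π) := by
        rw [Real.rpow_def_of_pos (by positivity), mul_comm]

end S1

namespace S1
open Real

lemma ball_sub (z : ℂ) (hz : z ∈ oDisc) : closedBall (0:ℂ) ‖z‖ ⊆ oDisc := by
  intro t ht
  simp only [mem_closedBall, dist_zero_right] at ht
  exact lt_of_le_of_lt ht hz

lemma sol_bound (e : ℝ) (he : 0 < e) (f : ℂ → ℂ) (hdiff : DifferentiableOn ℂ f oDisc)
    (hode : ∀ z ∈ oDisc, deriv (deriv f) z + Af e z * f z = 0) :
    ∃ C : ℝ, 0 ≤ C ∧ ∀ z ∈ oDisc,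
      ‖f z‖ ≤ C * ((2 / (1 - ‖z‖)) ^ (2*e*π))^3 := by
  have hfan : AnalyticOnNhd ℂ f oDisc := hdiff.analyticOnNhd oDisc_open
  have hdf : ∀ z ∈ oDisc, HasDerivAt f (deriv f z) z :=
    fun z hz => ((hfan z hz).differentiableAt).hasDerivAt
  have hddf : ∀ z ∈ oDisc, HasDerivAt (deriv f) (deriv (deriv f) z) z :=
    fun z hz => ((hfan.deriv z hz).differentiableAt).hasDerivAt
  set W : ℂ → ℂ := fun w => f w * (G e w * f1 e w) - deriv f w * f1 e w with hWdef
  have hW : ∀ z ∈ oDisc, HasDerivAt W 0 z := by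
    intro z hz
    have h1 := (hdf z hz).mul (hasDerivAt_Gf1 e z hz)
    have h2 := (hddf z hz).mul (hasDerivAt_f1 e z hz)
    have h := h1.sub h2
    refine h.congr_deriv (Eq.symm ?_)
    have hf2 : deriv (deriv f) z = -(Af e z * f z) :=
      eq_neg_of_add_eq_zero_left (hode z hz)
    rw [hf2]
    ring
  have hconst : ∀ z ∈ oDisc, W z = W 0 := by
    intro z hz
    have hzm : z ∈ closedBall (0:ℂ) ‖z‖ := by
      simp only [mem_closedBall, dist_zero_right]; exact le_refl _
    have h := Convex.norm_image_sub_le_of_norm_hasDerivWithin_le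
      (f' := fun _ : ℂ => (0:ℂ)) (C := 0)
      (fun x hx => (hW x (ball_sub z hz hx)).hasDerivWithinAt)
      (fun x _ => by simp) (convex_closedBall _ _)
      (mem_closedBall_self (norm_nonneg z)) hzm
    rw [zero_mul] at h
    exact sub_eq_zero.mp (norm_le_zero_iff.mp h)
  set c : ℂ := W 0 with hcdef
  set u : ℂ → ℂ := fun w => f w * Complex.exp (-(g e w)) with hudef
  set Du : ℂ → ℂ := fun w => -c * (Complex.exp (-(g e w)))^2 with hDudef
  have hu : ∀ x ∈ oDisc, HasDerivAt u (Du x) x := by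
    intro x hx
    have h := (hdf x hx).mul ((hasDerivAt_g e x hx).neg.cexp)
    refine h.congr_deriv (Eq.symm ?_)
    have hc' : c = f x * (G e x * Complex.exp (g e x)) - deriv f x * Complex.exp (g e x) :=
      (hconst x hx).symm
    have hEF : Complex.exp (-(g e x)) * Complex.exp (g e x) = 1 := by
      rw [← Complex.exp_add]; simp
    rw [hDudef]
    simp only
    rw [hc']
    linear_combination ((deriv f x - f x * G e x) * Complex.exp (-(g e x))) * hEF
  -- bound on exp(-g)
  have hexp_neg : ∀ x ∈ oDisc, ‖Complex.exp (-(g e x))‖ ≤ (2 / (1 - ‖x‖)) ^ (2*e*π) := by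
    intro x hx
    have : -(g e x) = Complex.I * ((-e : ℝ) : ℂ) * (L x)^2 := by
      rw [g]; push_cast; try ring
    rw [this]
    exact norm_exp_le e (-e) (by rw [abs_neg, abs_of_pos he]) x hx
  have hexp_pos : ∀ x ∈ oDisc, ‖Complex.exp (g e x)‖ ≤ (2 / (1 - ‖x‖)) ^ (2*e*π) := by
    intro x hx
    have : g e x = Complex.I * ((e : ℝ) : ℂ) * (L x)^2 := rfl
    rw [this]
    exact norm_exp_le e e (by rw [abs_of_pos he]) x hx
  refine ⟨‖u 0‖ + ‖c‖, by positivity, ?_⟩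
  intro z hz
  set B : ℝ := (2 / (1 - ‖z‖)) ^ (2*e*π) with hBdef
  have hB1 : 1 ≤ B := by
    apply Real.one_le_rpow (by linarith [base_ge_two z hz]) (by positivity)
  have hmono : ∀ x ∈ closedBall (0:ℂ) ‖z‖, (2 / (1 - ‖x‖)) ^ (2*e*π) ≤ B := by
    intro x hx
    have hsx := s_pos x (ball_sub z hz hx)
    simp only [mem_closedBall, dist_zero_right] at hx
    apply Real.rpow_le_rpow (div_nonneg (by norm_num) hsx.le) ?_ (by positivity)
    exact div_le_div_of_nonneg_left (by norm_num) (s_pos z hz) (by linarith)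
  have hDu_bound : ∀ x ∈ closedBall (0:ℂ) ‖z‖, ‖Du x‖ ≤ ‖c‖ * B^2 := by
    intro x hx
    have hx' : x ∈ oDisc := ball_sub z hz hx
    have h1 := hexp_neg x hx'
    have h2 := hmono x hx
    have h3 : (0:ℝ) ≤ (2 / (1 - ‖x‖)) ^ (2*e*π) :=
      Real.rpow_nonneg (div_nonneg (by norm_num) (s_pos x hx').le) _
    calc ‖Du x‖ = ‖c‖ * ‖Complex.exp (-(g e x))‖^2 := by
          rw [hDudef]; simp [norm_mul, norm_pow]
      _ ≤ ‖c‖ * B^2 := by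
          apply mul_le_mul_of_nonneg_left _ (norm_nonneg c)
          apply pow_le_pow_left₀ (norm_nonneg _) (h1.trans h2)
  have huz : ‖u z - u 0‖ ≤ ‖c‖ * B^2 * ‖z‖ := by
    have h := Convex.norm_image_sub_le_of_norm_hasDerivWithin_le
      (f' := Du) (C := ‖c‖ * B^2)
      (fun x hx => (hu x (ball_sub z hz hx)).hasDerivWithinAt)
      hDu_bound (convex_closedBall _ _)
      (mem_closedBall_self (norm_nonneg z))
      (by simp only [mem_closedBall, dist_zero_right]; exact le_refl _ :
        z ∈ closedBall (0:ℂ) ‖z‖)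
    simpa using h
  have hufz : f z = u z * Complex.exp (g e z) := by
    rw [hudef]
    simp only
    rw [mul_assoc, ← Complex.exp_add]
    simp
  have hnu : ‖u z‖ ≤ ‖u 0‖ + ‖c‖ * B^2 := by
    have := norm_sub_norm_le (u z) (u 0)
    have hz1 : ‖z‖ ≤ 1 := le_of_lt hz
    nlinarith [huz, norm_nonneg c, sq_nonneg B, norm_nonneg (u z), norm_nonneg (u 0),
      mul_le_mul_of_nonneg_left hz1 (mul_nonneg (norm_nonneg c) (sq_nonneg B))]
  calc ‖f z‖ = ‖u z‖ * ‖Complex.exp (g e z)‖ := by rw [hufz, norm_mul]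
    _ ≤ (‖u 0‖ + ‖c‖ * B^2) * B :=
        mul_le_mul hnu (hexp_pos z hz) (norm_nonneg _) (by positivity)
    _ = ‖u 0‖ * B + ‖c‖ * B^3 := by ring
    _ ≤ ‖u 0‖ * B^3 + ‖c‖ * B^3 := by
        have hBB : B ≤ B^3 := by nlinarith
        have := mul_le_mul_of_nonneg_left hBB (norm_nonneg (u 0))
        linarith
    _ = (‖u 0‖ + ‖c‖) * B^3 := by ring

end S1

namespace S1
open Real

def zT (T : ℝ) : ℂ := ((1 - Real.exp (-T) : ℝ) : ℂ)

lemma zT_facts (T : ℝ) (hT : 1 ≤ T) :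
    zT T ∈ oDisc ∧ ‖zT T‖ = 1 - Real.exp (-T) ∧
    (1 : ℂ) - zT T = ((Real.exp (-T) : ℝ) : ℂ) ∧ L (zT T) = ((-T : ℝ) : ℂ) := by
  have h1 : Real.exp (-T) ≤ 1 := by
    rw [Real.exp_le_one_iff]; linarith
  have h2 : 0 < Real.exp (-T) := Real.exp_pos _
  have hnorm : ‖zT T‖ = 1 - Real.exp (-T) := by
    rw [zT, Complex.norm_real, Real.norm_eq_abs, _root_.abs_of_nonneg (by linarith)]
  have hmem : zT T ∈ oDisc := by
    show ‖zT T‖ < 1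
    rw [hnorm]; linarith
  have hsub : (1 : ℂ) - zT T = ((Real.exp (-T) : ℝ) : ℂ) := by
    rw [zT]; push_cast; ring
  have hL : L (zT T) = ((-T : ℝ) : ℂ) := by
    rw [L, hsub, ← Complex.ofReal_log h2.le, Real.log_exp]
  exact ⟨hmem, hnorm, hsub, hL⟩

lemma Af_large (e T : ℝ) (he : 0 < e) (hT : 1 ≤ T) :
    4 * e^2 * T^2 ≤ ‖Af e (zT T)‖ * (1 - ‖zT T‖^2)^2 := by
  obtain ⟨hmem, hnorm, hsub, hL⟩ := zT_facts T hT
  have h2 : 0 < Real.exp (-T) := Real.exp_pos _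
  set r : ℝ := 1 - Real.exp (-T) with hr
  have hr0 : 0 ≤ r := by
    have : Real.exp (-T) ≤ 1 := by rw [Real.exp_le_one_iff]; linarith
    simp only [hr]; linarith
  set N : ℂ := 2 * Complex.I * e * (L (zT T) - 1) + 4 * e^2 * (L (zT T))^2 with hN
  have hNre : N.re = 4 * e^2 * T^2 := by
    rw [hN, hL]
    simp [Complex.mul_re, Complex.mul_im, pow_two]
    try ring
  have hNlow : 4 * e^2 * T^2 ≤ ‖N‖ := by
    rw [← hNre]
    calc N.re ≤ |N.re| := le_abs_self _
      _ ≤ ‖N‖ := Complex.abs_re_le_norm N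
      _ = ‖N‖ := rfl
  have hAf : ‖Af e (zT T)‖ = ‖N‖ / (Real.exp (-T))^2 := by
    rw [Af, ← hN, norm_div, norm_pow, hsub, Complex.norm_real, Real.norm_eq_abs,
      abs_of_pos h2]
  have h1r : 1 - r = Real.exp (-T) := by rw [hr]; ring
  have hfac : 1 - ‖zT T‖^2 = Real.exp (-T) * (1 + r) := by
    rw [hnorm]; linear_combination (1+r) * h1r
  rw [hAf, hfac]
  have hNn : 0 ≤ ‖N‖ := norm_nonneg N
  have key : ‖N‖ / (Real.exp (-T))^2 * (Real.exp (-T) * (1 + r))^2 = ‖N‖ * (1 + r)^2 := by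
    field_simp
  rw [key]
  nlinarith [hNlow, hNn, hr0, sq_nonneg r, mul_nonneg hNn hr0, mul_nonneg hNn (sq_nonneg r)]

lemma f1_sph (e T : ℝ) (he : 0 < e) (hT : 1 ≤ T) :
    e * T ≤ ‖deriv (f1 e) (zT T)‖ / (1 + ‖f1 e (zT T)‖^2) * (1 - ‖zT T‖^2) := by
  obtain ⟨hmem, hnorm, hsub, hL⟩ := zT_facts T hT
  have h2 : 0 < Real.exp (-T) := Real.exp_pos _
  set r : ℝ := 1 - Real.exp (-T) with hr
  have hr0 : 0 ≤ r := by
    have : Real.exp (-T) ≤ 1 := by rw [Real.exp_le_one_iff]; linarith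
    simp only [hr]; linarith
  have hf1 : ‖f1 e (zT T)‖ = 1 := by
    have hg : g e (zT T) = Complex.I * ((e * T^2 : ℝ) : ℂ) := by
      rw [g, hL]; push_cast; ring
    rw [f1, hg, Complex.norm_exp,
      show (Complex.I * ((e * T^2 : ℝ) : ℂ)).re = 0 by
        simp only [Complex.mul_re, Complex.I_re, Complex.I_im, Complex.ofReal_re,
          Complex.ofReal_im, zero_mul, one_mul, mul_zero]
        ring, Real.exp_zero]
  have hG : ‖G e (zT T)‖ = 2 * e * T / Real.exp (-T) := by
    rw [G, hL, hsub, norm_div, Complex.norm_real, Real.norm_eq_abs, abs_of_pos h2]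
    have : ‖-2 * Complex.I * (e:ℂ) * ((-T : ℝ) : ℂ)‖ = 2 * e * T := by
      rw [show (-2 : ℂ) * Complex.I * (e:ℂ) * ((-T : ℝ) : ℂ) = Complex.I * ((2*e*T : ℝ):ℂ) by
        push_cast; ring]
      rw [norm_mul, Complex.norm_I, Complex.norm_real, Real.norm_eq_abs, one_mul,
        abs_of_pos (by nlinarith)]
    rw [this]
  have hderiv : ‖deriv (f1 e) (zT T)‖ = 2 * e * T / Real.exp (-T) := by
    rw [deriv_f1 e _ hmem, norm_mul, hf1, mul_one, hG]
  have h1r : 1 - r = Real.exp (-T) := by rw [hr]; ring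
  have hfac : 1 - ‖zT T‖^2 = Real.exp (-T) * (1 + r) := by
    rw [hnorm]; linear_combination (1+r) * h1r
  rw [hderiv, hf1, hfac]
  have key : 2 * e * T / Real.exp (-T) / (1 + 1^2) * (Real.exp (-T) * (1 + r)) =
      e * T * (1 + r) := by
    field_simp
    ring
  rw [key]
  nlinarith [mul_nonneg (mul_nonneg he.le (le_trans zero_le_one hT)) hr0]

end S1

namespace S1
open Real

lemma rpow_bound (p : ℝ) (hp : 0 < p) (z : ℂ) (hz : z ∈ oDisc) :
    ((2 / (1 - ‖z‖)) ^ (p/4))^3 * (1 - ‖z‖^2)^p ≤ 2^(2*p) := by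
  have hs := s_pos z hz
  have hz1 : ‖z‖ < 1 := hz
  have hz0 : 0 ≤ ‖z‖ := norm_nonneg z
  have hb0 : (0:ℝ) ≤ 2 / (1 - ‖z‖) := div_nonneg (by norm_num) hs.le
  have hA : ((2 / (1 - ‖z‖)) ^ (p/4))^3 = (2 / (1 - ‖z‖)) ^ (3*p/4) := by
    rw [← Real.rpow_natCast ((2 / (1 - ‖z‖)) ^ (p/4)) 3, ← Real.rpow_mul hb0]
    norm_num
    ring_nf
  have hB : (1 - ‖z‖^2)^p ≤ (2 * (1 - ‖z‖))^p := by
    apply Real.rpow_le_rpow (by nlinarith) (by nlinarith) hp.le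
  have hsq : 0 ≤ (1 - ‖z‖^2) := by nlinarith
  calc ((2 / (1 - ‖z‖)) ^ (p/4))^3 * (1 - ‖z‖^2)^p
      ≤ (2 / (1 - ‖z‖)) ^ (3*p/4) * (2 * (1 - ‖z‖))^p := by
        rw [hA]
        exact mul_le_mul_of_nonneg_left hB (Real.rpow_nonneg hb0 _)
    _ = 2 ^ (3*p/4) * 2^p * ((1 - ‖z‖)^p / (1 - ‖z‖)^(3*p/4)) := by
        rw [Real.div_rpow (by norm_num) hs.le, Real.mul_rpow (by norm_num) hs.le]
        field_simp
    _ = 2 ^ (3*p/4 + p) * (1 - ‖z‖)^(p - 3*p/4) := by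
        rw [Real.rpow_add (by norm_num : (0:ℝ) < 2), Real.rpow_sub hs]
    _ ≤ 2 ^ (3*p/4 + p) * 1 := by
        apply mul_le_mul_of_nonneg_left _ (Real.rpow_nonneg (by norm_num) _)
        apply Real.rpow_le_one hs.le (by linarith) (by linarith)
    _ ≤ 2^(2*p) := by
        rw [mul_one]
        apply Real.rpow_le_rpow_of_exponent_le one_le_two (by linarith)

theorem stmt1' (p : ℝ) (hp : 0 < p) :
    ∃ A : ℂ → ℂ, DifferentiableOn ℂ A oDisc ∧
      (¬ ∃ C : ℝ, ∀ z ∈ oDisc, ‖A z‖ * (1 - ‖z‖ ^ 2) ^ 2 ≤ C) ∧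
      (∀ f : ℂ → ℂ, IsSolution A f →
        ∃ M : ℝ, ∀ z ∈ oDisc, ‖f z‖ * (1 - ‖z‖ ^ 2) ^ p ≤ M) ∧
      (∃ f : ℂ → ℂ, IsSolution A f ∧ (∃ z ∈ oDisc, f z ≠ 0) ∧
        ¬ ∃ M : ℝ, ∀ z ∈ oDisc,
          ‖deriv f z‖ / (1 + ‖f z‖ ^ 2) * (1 - ‖z‖ ^ 2) ≤ M) := by
  have hπ : (0:ℝ) < π := Real.pi_pos
  set e : ℝ := p / (8 * π) with hedef
  have he : 0 < e := div_pos hp (by positivity)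
  have hexp : 2 * e * π = p / 4 := by
    rw [hedef]; field_simp; ring
  refine ⟨Af e, diffOn_Af e, ?_, ?_, ?_⟩
  · rintro ⟨C, hC⟩
    set T : ℝ := max 1 ((|C| + 1) / (4 * e^2)) with hTdef
    have hT1 : (1:ℝ) ≤ T := le_max_left _ _
    have h1 : |C| + 1 ≤ T * (4 * e^2) :=
      (div_le_iff₀ (by positivity)).mp (le_max_right _ _)
    have hlarge := Af_large e T he hT1
    have hmem := (zT_facts T hT1).1
    have hCb := hC _ hmem
    have h2 := le_abs_self C
    nlinarith [mul_nonneg (mul_nonneg (by positivity : (0:ℝ) ≤ 4*e^2)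
      (by linarith : (0:ℝ) ≤ T)) (by linarith : (0:ℝ) ≤ T - 1)]
  · rintro f ⟨hdiff, hode⟩
    obtain ⟨C, hC0, hCb⟩ := sol_bound e he f hdiff hode
    refine ⟨C * 2^(2*p), ?_⟩
    intro z hz
    have h1 := hCb z hz
    rw [hexp] at h1
    have h2 := rpow_bound p hp z hz
    have hzn : ‖z‖ < 1 := hz
    have h3 : (0:ℝ) ≤ (1 - ‖z‖^2)^p :=
      Real.rpow_nonneg (by nlinarith [norm_nonneg z]) _
    calc ‖f z‖ * (1 - ‖z‖^2)^p
        ≤ C * ((2 / (1 - ‖z‖)) ^ (p/4))^3 * (1 - ‖z‖^2)^p :=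
          mul_le_mul_of_nonneg_right h1 h3
      _ = C * (((2 / (1 - ‖z‖)) ^ (p/4))^3 * (1 - ‖z‖^2)^p) := by ring
      _ ≤ C * 2^(2*p) := mul_le_mul_of_nonneg_left h2 hC0
  · refine ⟨f1 e, sol_f1 e, ⟨0, ?_, ?_⟩, ?_⟩
    · show ‖(0:ℂ)‖ < 1
      simp
    · rw [f1, g, L]
      simp [Complex.log_one]
    · rintro ⟨M, hM⟩
      set T : ℝ := max 1 ((|M| + 1) / e) with hTdef
      have hT1 : (1:ℝ) ≤ T := le_max_left _ _
      have h1 : |M| + 1 ≤ T * e := (div_le_iff₀ he).mp (le_max_right _ _)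
      have hsph := f1_sph e T he hT1
      have hmem := (zT_facts T hT1).1
      have hMb := hM _ hmem
      have h2 := le_abs_self M
      nlinarith

end S1


/-- For every `0 < p` there is `A` analytic in the disc with
`sup |A|(1-|z|²)² = ∞`, all solutions in `H^∞_p`, and some non-trivial non-normal solution. -/
theorem stmt1 (p : ℝ) (hp : 0 < p) :
    ∃ A : ℂ → ℂ, DifferentiableOn ℂ A oDisc ∧
      (¬ ∃ C : ℝ, ∀ z ∈ oDisc, ‖A z‖ * (1 - ‖z‖ ^ 2) ^ 2 ≤ C) ∧
      (∀ f : ℂ → ℂ, IsSolution A f →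
        ∃ M : ℝ, ∀ z ∈ oDisc, ‖f z‖ * (1 - ‖z‖ ^ 2) ^ p ≤ M) ∧
      (∃ f : ℂ → ℂ, IsSolution A f ∧ (∃ z ∈ oDisc, f z ≠ 0) ∧
        ¬ ∃ M : ℝ, ∀ z ∈ oDisc,
          ‖deriv f z‖ / (1 + ‖f z‖ ^ 2) * (1 - ‖z‖ ^ 2) ≤ M) :=
  S1.stmt1' p hp
end
end

section
/- Let f₁, f₂ be linearly independent analytic solutions of f'' + A f = 0 in 𝔻, where A is analytic in 𝔻, and define u(z) = log( (|f₁(z)|² + |f₂(z)|²) / |W(f₁,f₂)| ). Then: (i) Δu = 4 e^{-2u} in 𝔻; (ii) Δu + |∇u|² = e^{-u} Δ(e^u) in 𝔻; (iii) A = -∂²u - (∂u)² in 𝔻, where ∂ = (1/2)(∂/∂x - i ∂/∂y). -/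
open Complex MeasureTheory Metric Set
open scoped BigOperators

noncomputable section

/-!
Write `V = |f₁|² + |f₂|²`. The Wronskian is constant, since `W' = f₁ f₂'' - f₁'' f₂ = 0`, and
non-zero by linear independence, so `e^u = V / |W|` near every point of the disc. Identity (ii) is
the chain rule `Δ(e^u) = e^u (Δu + |∇u|²)`, valid for every `C²` function. With
`P = ∂V = f̄₁ f₁' + f̄₂ f₂'` one has `ΔV = 4 (|f₁'|² + |f₂'|²)` and `|∇u|² = 4 |∂u|² = 4 |P|² / V²`,
so (i) reduces to Lagrange's identity `V (|f₁'|² + |f₂'|²) = |P|² + |W|²`. For (iii), the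
Wirtinger chain rule gives `∂²(e^u) = e^u (∂²u + (∂u)²)`, while `∂²V = f̄₁ f₁'' + f̄₂ f₂'' = -A V`
because the `f̄ⱼ` are antiholomorphic.
-/

open Filter Topology InnerProductSpace Laplacian

theorem ContDiffAt.differentiableAt_fderiv {E F : Type*} [NormedAddCommGroup E]
    [NormedSpace ℝ E] [NormedAddCommGroup F] [NormedSpace ℝ F] {u : E → F} {z : E}
    (h : ContDiffAt ℝ 2 u z) : DifferentiableAt ℝ (fderiv ℝ u) z :=
  (h.fderiv_right (m := 1) (by norm_num)).differentiableAt (by norm_num)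

theorem lapl_eq_laplacian {u : ℂ → ℝ} {z : ℂ} (h : DifferentiableAt ℝ (fderiv ℝ u) z) :
    lapl u z = Δ u z := by
  rw [laplacian_eq_iteratedFDeriv_complexPlane, lapl,
    fderiv_clm_apply h (differentiableAt_const _), fderiv_clm_apply h (differentiableAt_const _)]
  simp [iteratedFDeriv_two_apply]

theorem Filter.EventuallyEq.lapl_eq {u v : ℂ → ℝ} {z : ℂ} (h : u =ᶠ[𝓝 z] v) :
    lapl u z = lapl v z := by
  have hD : ∀ e : ℂ, (fun w => fderiv ℝ u w e) =ᶠ[𝓝 z] fun w => fderiv ℝ v w e :=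
    fun e => (h.fderiv (𝕜 := ℝ)).fun_comp (· e)
  rw [lapl, lapl, (hD 1).fderiv_eq, (hD Complex.I).fderiv_eq]

theorem lapl_exp_comp {u : ℂ → ℝ} {z : ℂ} (hu : ContDiffAt ℝ 2 u z) :
    lapl (fun w => Real.exp (u w)) z = Real.exp (u z) * (lapl u z + gradSq u z) := by
  have hdiff : ∀ᶠ w in 𝓝 z, DifferentiableAt ℝ u w :=
    (hu.eventually (by simp)).mono fun w hw => hw.differentiableAt (by norm_num)
  have key : ∀ e, fderiv ℝ (fun w => fderiv ℝ (fun x => Real.exp (u x)) w e) z e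
      = Real.exp (u z) * (fderiv ℝ (fun w => fderiv ℝ u w e) z e + fderiv ℝ u z e ^ 2) := by
    intro e
    have hloc : (fun w => fderiv ℝ (fun x => Real.exp (u x)) w e)
        =ᶠ[𝓝 z] fun w => Real.exp (u w) * fderiv ℝ u w e :=
      hdiff.mono fun w hw => by simp [hw.hasFDerivAt.exp.fderiv]
    rw [hloc.fderiv_eq, fderiv_fun_mul (hu.differentiableAt (by norm_num)).exp
      (hu.differentiableAt_fderiv.clm_apply (differentiableAt_const e)),
      ((hu.differentiableAt (by norm_num)).hasFDerivAt.exp).fderiv]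
    simp only [add_apply, smul_apply, smul_eq_mul]
    ring
  simp only [lapl, gradSq, key]
  ring

theorem lapl_norm_sq_comp {f : ℂ → ℂ} {z : ℂ} (hf : AnalyticAt ℂ f z) :
    lapl (fun w => ‖f w‖ ^ 2) z = 4 * ‖deriv f z‖ ^ 2 := by
  have key : ∀ e, fderiv ℝ (fun w => fderiv ℝ (fun x => ‖f x‖ ^ 2) w e) z e
      = 2 * (inner ℝ (f z) (e * (e * deriv (deriv f) z)) + ‖e * deriv f z‖ ^ 2) := by
    intro e
    have hloc : (fun w => fderiv ℝ (fun x => ‖f x‖ ^ 2) w e)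
        =ᶠ[𝓝 z] fun w => 2 * inner ℝ (f w) (e * deriv f w) :=
      hf.eventually_analyticAt.mono fun w hw => by
        dsimp only
        rw [(hw.differentiableAt.hasDerivAt.hasFDerivAt.restrictScalars ℝ).norm_sq.fderiv]
        simp only [smul_apply, ContinuousLinearMap.comp_apply,
          ContinuousLinearMap.coe_restrictScalars', ContinuousLinearMap.toSpanSingleton_apply,
          smul_eq_mul, coe_innerSL_apply, nsmul_eq_mul, Nat.cast_ofNat, mul_comm e]
    have h₁ := hf.differentiableAt.hasDerivAt.hasFDerivAt.restrictScalars ℝ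
    have h₂ := (hf.deriv.differentiableAt.hasDerivAt.hasFDerivAt.restrictScalars ℝ).const_mul e
    rw [hloc.fderiv_eq, ((h₁.inner ℝ h₂).const_mul 2).fderiv]
    simp only [smul_apply, ContinuousLinearMap.comp_apply, ContinuousLinearMap.prod_apply,
      ContinuousLinearMap.coe_restrictScalars', ContinuousLinearMap.toSpanSingleton_apply,
      smul_eq_mul, fderivInnerCLM_apply, real_inner_self_eq_norm_sq]
  have hI : Complex.I * (Complex.I * deriv (deriv f) z) = -deriv (deriv f) z := by
    rw [← mul_assoc, Complex.I_mul_I, neg_one_mul]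
  simp only [lapl, key, hI, inner_neg_right, norm_mul, Complex.norm_I, one_mul]
  ring

theorem HasFDerivAt.wirt_eq {g : ℂ → ℂ} {L : ℂ →L[ℝ] ℂ} {z : ℂ} (h : HasFDerivAt g L z) :
    wirt g z = 1 / 2 * (L 1 - Complex.I * L Complex.I) := by
  rw [wirt, h.fderiv]

theorem Filter.EventuallyEq.wirt {f g : ℂ → ℂ} {z : ℂ} (h : f =ᶠ[𝓝 z] g) :
    _root_.wirt f =ᶠ[𝓝 z] _root_.wirt g :=
  (h.fderiv (𝕜 := ℝ)).mono fun w hw => by simp only [_root_.wirt, hw]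

theorem wirt_add {f g : ℂ → ℂ} {z : ℂ} (hf : DifferentiableAt ℝ f z)
    (hg : DifferentiableAt ℝ g z) :
    wirt (fun w => f w + g w) z = wirt f z + wirt g z := by
  rw [(hf.hasFDerivAt.fun_add hg.hasFDerivAt).wirt_eq, wirt, wirt]
  simp only [FunLike.coe_add, Pi.add_apply]
  ring

theorem wirt_mul {f g : ℂ → ℂ} {z : ℂ} (hf : DifferentiableAt ℝ f z)
    (hg : DifferentiableAt ℝ g z) :
    wirt (fun w => f w * g w) z = f z * wirt g z + wirt f z * g z := by
  rw [(hf.hasFDerivAt.fun_mul hg.hasFDerivAt).wirt_eq, wirt, wirt]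
  simp only [one_div, add_apply, smul_apply, smul_eq_mul]
  ring

theorem wirt_div_const {f : ℂ → ℂ} {z : ℂ} (hf : DifferentiableAt ℝ f z) (c : ℂ) :
    wirt (fun w => f w / c) z = wirt f z / c := by
  simp_rw [div_eq_mul_inv]
  rw [(hf.hasFDerivAt.mul_const c⁻¹).wirt_eq, wirt]
  simp only [FunLike.coe_smul, Pi.smul_apply, smul_eq_mul]
  ring

theorem wirt_cexp_comp {g : ℂ → ℂ} {z : ℂ} (hg : DifferentiableAt ℝ g z) :
    wirt (fun w => Complex.exp (g w)) z = Complex.exp (g z) * wirt g z := by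
  rw [hg.hasFDerivAt.cexp.wirt_eq, wirt]
  simp only [one_div, smul_apply, smul_eq_mul]
  ring

theorem wirt_wirt_cexp_comp {g : ℂ → ℂ} {z : ℂ} (hg : ContDiffAt ℝ 2 g z) :
    wirt (wirt fun w => Complex.exp (g w)) z
      = Complex.exp (g z) * (wirt (wirt g) z + wirt g z ^ 2) := by
  have hdiff : ∀ᶠ w in 𝓝 z, DifferentiableAt ℝ g w :=
    (hg.eventually (by simp)).mono fun w hw => hw.differentiableAt (by norm_num)
  have hwirt : DifferentiableAt ℝ (wirt g) z := by
    have hD := hg.differentiableAt_fderiv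
    unfold wirt
    fun_prop
  have hloc : wirt (fun w => Complex.exp (g w)) =ᶠ[𝓝 z] fun w => Complex.exp (g w) * wirt g w :=
    hdiff.mono fun w hw => wirt_cexp_comp hw
  have hexp : DifferentiableAt ℝ (fun w => Complex.exp (g w)) z :=
    (hg.differentiableAt (by norm_num)).cexp
  rw [hloc.wirt.eq_of_nhds, wirt_mul hexp hwirt, wirt_cexp_comp (hg.differentiableAt (by norm_num))]
  ring

theorem wirt_conj_mul {f g : ℂ → ℂ} {z : ℂ} (hf : DifferentiableAt ℂ f z)
    (hg : DifferentiableAt ℂ g z) :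
    wirt (fun w => starRingEnd ℂ (f w) * g w) z = starRingEnd ℂ (f z) * deriv g z := by
  have hf' := (hf.hasDerivAt.hasFDerivAt.restrictScalars ℝ).star
  rw [HasFDerivAt.wirt_eq (g := fun w => starRingEnd ℂ (f w) * g w)
    (hf'.fun_mul (hg.hasDerivAt.hasFDerivAt.restrictScalars ℝ))]
  simp only [one_div, RCLike.star_def, add_apply, smul_apply,
    ContinuousLinearMap.coe_restrictScalars', ContinuousLinearMap.toSpanSingleton_apply,
    smul_eq_mul, ContinuousLinearMap.comp_apply, ContinuousLinearEquiv.coe_coe, starL'_apply,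
    star_mul', conj_I, map_one]
  linear_combination
    (g z * starRingEnd ℂ (deriv f z) - starRingEnd ℂ (f z) * deriv g z) / 2 * Complex.I_mul_I

theorem wirt_conj_mul_add_conj_mul_div {f₁ f₂ g₁ g₂ : ℂ → ℂ} {z : ℂ}
    (hf₁ : DifferentiableAt ℂ f₁ z) (hg₁ : DifferentiableAt ℂ g₁ z)
    (hf₂ : DifferentiableAt ℂ f₂ z) (hg₂ : DifferentiableAt ℂ g₂ z) (c : ℂ) :
    wirt (fun w => (starRingEnd ℂ (f₁ w) * g₁ w + starRingEnd ℂ (f₂ w) * g₂ w) / c) z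
      = (starRingEnd ℂ (f₁ z) * deriv g₁ z + starRingEnd ℂ (f₂ z) * deriv g₂ z) / c := by
  have hd : ∀ {f g : ℂ → ℂ}, DifferentiableAt ℂ f z → DifferentiableAt ℂ g z →
      DifferentiableAt ℝ (fun w => starRingEnd ℂ (f w) * g w) z :=
    fun hf hg => (hf.restrictScalars ℝ).star.mul (hg.restrictScalars ℝ)
  rw [wirt_div_const ((hd hf₁ hg₁).fun_add (hd hf₂ hg₂)), wirt_add (hd hf₁ hg₁) (hd hf₂ hg₂),
    wirt_conj_mul hf₁ hg₁, wirt_conj_mul hf₂ hg₂]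

theorem gradSq_eq_norm_wirt_sq {u : ℂ → ℝ} {z : ℂ} (hu : DifferentiableAt ℝ u z) :
    gradSq u z = 4 * ‖wirt (fun w => (u w : ℂ)) z‖ ^ 2 := by
  rw [HasFDerivAt.wirt_eq (g := fun w => (u w : ℂ))
    ((Complex.ofRealCLM.hasFDerivAt).comp z hu.hasFDerivAt), gradSq]
  simp only [ContinuousLinearMap.comp_apply, Complex.ofRealCLM_apply]
  rw [show 1 / 2 * ((fderiv ℝ u z 1 : ℂ) - Complex.I * fderiv ℝ u z Complex.I)
      = 1 / 2 * (fderiv ℝ u z 1 + (-fderiv ℝ u z Complex.I : ℝ) * Complex.I) by push_cast; ring,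
    norm_mul, Complex.norm_add_mul_I, mul_pow, Real.sq_sqrt (by positivity),
    show ‖(1 / 2 : ℂ)‖ = 1 / 2 by norm_num]
  ring

theorem lagrange_identity (a b c d : ℂ) :
    (‖a‖ ^ 2 + ‖b‖ ^ 2) * (‖c‖ ^ 2 + ‖d‖ ^ 2)
      = ‖starRingEnd ℂ a * c + starRingEnd ℂ b * d‖ ^ 2 + ‖a * d - c * b‖ ^ 2 := by
  simp only [← Complex.normSq_eq_norm_sq, Complex.normSq_apply, Complex.add_re, Complex.add_im,
    Complex.sub_re, Complex.sub_im, Complex.mul_re, Complex.mul_im, Complex.conj_re,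
    Complex.conj_im]
  ring

theorem oDisc_eq_ball : oDisc = Metric.ball 0 1 := by
  ext z
  simp [oDisc]

theorem isOpen_oDisc : IsOpen oDisc := oDisc_eq_ball ▸ Metric.isOpen_ball

theorem isPreconnected_oDisc : IsPreconnected oDisc :=
  oDisc_eq_ball ▸ (convex_ball 0 1).isPreconnected

section Wronskian

variable {A f₁ f₂ : ℂ → ℂ}

theorem IsSolution.analyticOnNhd {f : ℂ → ℂ} (hf : IsSolution A f) : AnalyticOnNhd ℂ f oDisc :=
  hf.1.analyticOnNhd isOpen_oDisc

theorem IsSolution.hasDerivAt_wr (hf₁ : IsSolution A f₁) (hf₂ : IsSolution A f₂) {z : ℂ}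
    (hz : z ∈ oDisc) : HasDerivAt (Wr f₁ f₂) 0 z := by
  have h₁ := hf₁.analyticOnNhd z hz
  have h₂ := hf₂.analyticOnNhd z hz
  refine ((h₁.differentiableAt.hasDerivAt.mul h₂.deriv.differentiableAt.hasDerivAt).sub
    (h₁.deriv.differentiableAt.hasDerivAt.mul h₂.differentiableAt.hasDerivAt)).congr_deriv ?_
  linear_combination f₁ z * hf₂.2 z hz - f₂ z * hf₁.2 z hz

theorem IsSolution.wr_eq_wr_zero (hf₁ : IsSolution A f₁) (hf₂ : IsSolution A f₂) {z : ℂ}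
    (hz : z ∈ oDisc) : Wr f₁ f₂ z = Wr f₁ f₂ 0 :=
  isOpen_oDisc.is_const_of_deriv_eq_zero isPreconnected_oDisc
    (fun w hw => (hf₁.hasDerivAt_wr hf₂ hw).differentiableAt.differentiableWithinAt)
    (fun w hw => (hf₁.hasDerivAt_wr hf₂ hw).deriv) hz (by simp [oDisc])

theorem eqOn_const_mul_of_wr_eq_zero {U : Set ℂ} (hU : IsOpen U) (hU' : IsPreconnected U)
    (h₁ : DifferentiableOn ℂ f₁ U) (h₂ : DifferentiableOn ℂ f₂ U)
    (hW : ∀ z ∈ U, Wr f₁ f₂ z = 0) {z₀ : ℂ} (hz₀ : z₀ ∈ U) (hne : f₂ z₀ ≠ 0) :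
    EqOn f₁ (fun z => f₁ z₀ / f₂ z₀ * f₂ z) U := by
  obtain ⟨r, hr, hball⟩ := Metric.eventually_nhds_iff_ball.1 ((hU.eventually_mem hz₀).and
    ((h₂.continuousOn.continuousAt (hU.mem_nhds hz₀)).eventually_ne hne))
  have hquot : ∀ z ∈ Metric.ball z₀ r, HasDerivAt (fun w => f₁ w / f₂ w) 0 z := by
    intro z hz
    obtain ⟨hzU, hz0⟩ := hball z hz
    -- `(f₁ / f₂)' = -W / f₂²`
    refine ((h₁.differentiableAt (hU.mem_nhds hzU)).hasDerivAt.div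
      (h₂.differentiableAt (hU.mem_nhds hzU)).hasDerivAt hz0).congr_deriv ?_
    rw [div_eq_zero_iff, ← neg_eq_zero, ← hW z hzU, Wr]
    left
    ring
  have hloc : f₁ =ᶠ[𝓝 z₀] fun z => f₁ z₀ / f₂ z₀ * f₂ z := by
    filter_upwards [Metric.ball_mem_nhds z₀ hr] with z hz
    have := Metric.isOpen_ball.is_const_of_deriv_eq_zero (convex_ball z₀ r).isPreconnected
      (fun w hw => (hquot w hw).differentiableAt.differentiableWithinAt)
      (fun w hw => (hquot w hw).deriv) hz (Metric.mem_ball_self hr)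
    rw [← this, div_mul_cancel₀ _ (hball z hz).2]
  exact (h₁.analyticOnNhd hU).eqOn_of_preconnected_of_eventuallyEq
    (((differentiableOn_const _).mul h₂).analyticOnNhd hU) hU' hz₀ hloc

theorem LinIndep.exists_wr_ne_zero (hli : LinIndep f₁ f₂) (h₁ : DifferentiableOn ℂ f₁ oDisc)
    (h₂ : DifferentiableOn ℂ f₂ oDisc) : ∃ z ∈ oDisc, Wr f₁ f₂ z ≠ 0 := by
  by_contra! hW
  by_cases hf₂ : ∀ z ∈ oDisc, f₂ z = 0
  · exact one_ne_zero (hli 0 1 fun z hz => by simp [hf₂ z hz]).2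
  push Not at hf₂
  obtain ⟨z₀, hz₀, hne⟩ := hf₂
  have hEq := eqOn_const_mul_of_wr_eq_zero isOpen_oDisc isPreconnected_oDisc h₁ h₂ hW hz₀ hne
  exact one_ne_zero (hli 1 (-(f₁ z₀ / f₂ z₀)) fun z hz => by rw [hEq hz]; ring).1

end Wronskian

section Local

variable {f₁ f₂ : ℂ → ℂ} {z : ℂ}

theorem sq_norm_add_sq_norm_pos_of_wr_ne_zero (hW : Wr f₁ f₂ z ≠ 0) :
    0 < ‖f₁ z‖ ^ 2 + ‖f₂ z‖ ^ 2 := by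
  have hL := lagrange_identity (f₁ z) (f₂ z) (deriv f₁ z) (deriv f₂ z)
  have hW' : 0 < ‖f₁ z * deriv f₂ z - deriv f₁ z * f₂ z‖ ^ 2 := pow_pos (norm_pos_iff.2 hW) 2
  nlinarith [sq_nonneg ‖f₁ z‖, sq_nonneg ‖f₂ z‖, sq_nonneg ‖deriv f₁ z‖, sq_nonneg ‖deriv f₂ z‖,
    sq_nonneg ‖starRingEnd ℂ (f₁ z) * deriv f₁ z + starRingEnd ℂ (f₂ z) * deriv f₂ z‖]

theorem exp_uAux_eventuallyEq (hW : ∀ᶠ w in 𝓝 z, Wr f₁ f₂ w = Wr f₁ f₂ z)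
    (hW₀ : Wr f₁ f₂ z ≠ 0) :
    (fun w => Real.exp (uAux f₁ f₂ w))
      =ᶠ[𝓝 z] fun w => (‖f₁ w‖ ^ 2 + ‖f₂ w‖ ^ 2) / ‖Wr f₁ f₂ z‖ :=
  hW.mono fun w hw => by
    simp only [uAux, hw]
    rw [Real.exp_log (div_pos (sq_norm_add_sq_norm_pos_of_wr_ne_zero (hw ▸ hW₀))
      (norm_pos_iff.2 hW₀))]

theorem cexp_uAux_eventuallyEq (hW : ∀ᶠ w in 𝓝 z, Wr f₁ f₂ w = Wr f₁ f₂ z)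
    (hW₀ : Wr f₁ f₂ z ≠ 0) :
    (fun w => Complex.exp (uAux f₁ f₂ w)) =ᶠ[𝓝 z] fun w =>
      (starRingEnd ℂ (f₁ w) * f₁ w + starRingEnd ℂ (f₂ w) * f₂ w) / (‖Wr f₁ f₂ z‖ : ℂ) :=
  (exp_uAux_eventuallyEq hW hW₀).mono fun w hw => by
    dsimp only at hw ⊢
    rw [← Complex.ofReal_exp, hw, Complex.conj_mul', Complex.conj_mul']
    push_cast
    rfl

theorem contDiffAt_uAux (h₁ : AnalyticAt ℂ f₁ z) (h₂ : AnalyticAt ℂ f₂ z)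
    (hW : ∀ᶠ w in 𝓝 z, Wr f₁ f₂ w = Wr f₁ f₂ z) (hW₀ : Wr f₁ f₂ z ≠ 0) :
    ContDiffAt ℝ 2 (uAux f₁ f₂) z := by
  have hV : ContDiffAt ℝ 2 (fun w => (‖f₁ w‖ ^ 2 + ‖f₂ w‖ ^ 2) / ‖Wr f₁ f₂ z‖) z :=
    ((ContDiffAt.norm_sq ℝ (h₁.contDiffAt.restrict_scalars ℝ)).add
      (ContDiffAt.norm_sq ℝ (h₂.contDiffAt.restrict_scalars ℝ))).div_const _
  refine (hV.log (div_pos (sq_norm_add_sq_norm_pos_of_wr_ne_zero hW₀)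
    (norm_pos_iff.2 hW₀)).ne').congr_of_eventuallyEq (hW.mono fun w hw => ?_)
  simp only [uAux, hw]

theorem lapl_sq_norm_add_sq_norm_div (h₁ : AnalyticAt ℂ f₁ z) (h₂ : AnalyticAt ℂ f₂ z)
    (k : ℝ) :
    lapl (fun w => (‖f₁ w‖ ^ 2 + ‖f₂ w‖ ^ 2) / k) z
      = 4 * (‖deriv f₁ z‖ ^ 2 + ‖deriv f₂ z‖ ^ 2) / k := by
  have hn₁ := ContDiffAt.norm_sq ℝ (h₁.contDiffAt.restrict_scalars ℝ (n := 2))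
  have hn₂ := ContDiffAt.norm_sq ℝ (h₂.contDiffAt.restrict_scalars ℝ (n := 2))
  have hfun : (fun w => (‖f₁ w‖ ^ 2 + ‖f₂ w‖ ^ 2) / k)
      = k⁻¹ • ((fun w => ‖f₁ w‖ ^ 2) + fun w => ‖f₂ w‖ ^ 2) := by
    ext w
    simp [div_eq_inv_mul]
  rw [lapl_eq_laplacian ((hn₁.add hn₂).div_const k).differentiableAt_fderiv, hfun,
    laplacian_smul (f := (fun w => ‖f₁ w‖ ^ 2) + fun w => ‖f₂ w‖ ^ 2) _ (hn₁.add hn₂),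
    hn₁.laplacian_add hn₂, ← lapl_eq_laplacian hn₁.differentiableAt_fderiv,
    ← lapl_eq_laplacian hn₂.differentiableAt_fderiv, lapl_norm_sq_comp h₁, lapl_norm_sq_comp h₂]
  simp only [smul_eq_mul]
  ring

theorem wirt_uAux (h₁ : AnalyticAt ℂ f₁ z) (h₂ : AnalyticAt ℂ f₂ z)
    (hW : ∀ᶠ w in 𝓝 z, Wr f₁ f₂ w = Wr f₁ f₂ z) (hW₀ : Wr f₁ f₂ z ≠ 0) :
    wirt (fun w => (uAux f₁ f₂ w : ℂ)) z
      = (starRingEnd ℂ (f₁ z) * deriv f₁ z + starRingEnd ℂ (f₂ z) * deriv f₂ z)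
        / (‖f₁ z‖ ^ 2 + ‖f₂ z‖ ^ 2 : ℝ) := by
  have hE := cexp_uAux_eventuallyEq hW hW₀
  have key := wirt_cexp_comp (g := fun w => (uAux f₁ f₂ w : ℂ))
    (Complex.ofRealCLM.differentiableAt.comp z
      ((contDiffAt_uAux h₁ h₂ hW hW₀).differentiableAt (by norm_num)))
  rw [hE.wirt.eq_of_nhds, hE.eq_of_nhds, wirt_conj_mul_add_conj_mul_div h₁.differentiableAt
    h₁.differentiableAt h₂.differentiableAt h₂.differentiableAt, Complex.conj_mul',
    Complex.conj_mul'] at key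
  have hV : ((‖f₁ z‖ ^ 2 + ‖f₂ z‖ ^ 2 : ℝ) : ℂ) ≠ 0 :=
    Complex.ofReal_ne_zero.2 (sq_norm_add_sq_norm_pos_of_wr_ne_zero hW₀).ne'
  have hk : (‖Wr f₁ f₂ z‖ : ℂ) ≠ 0 := Complex.ofReal_ne_zero.2 (norm_ne_zero_iff.2 hW₀)
  push_cast at hV ⊢
  field_simp at key ⊢
  linear_combination -key

theorem lapl_uAux (h₁ : AnalyticAt ℂ f₁ z) (h₂ : AnalyticAt ℂ f₂ z)
    (hW : ∀ᶠ w in 𝓝 z, Wr f₁ f₂ w = Wr f₁ f₂ z) (hW₀ : Wr f₁ f₂ z ≠ 0) :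
    lapl (uAux f₁ f₂) z = 4 * Real.exp (-2 * uAux f₁ f₂ z) := by
  have hu := contDiffAt_uAux h₁ h₂ hW hW₀
  have hE := exp_uAux_eventuallyEq hW hW₀
  have key := lapl_exp_comp hu
  rw [hE.lapl_eq, lapl_sq_norm_add_sq_norm_div h₁ h₂, hE.eq_of_nhds,
    gradSq_eq_norm_wirt_sq (hu.differentiableAt (by norm_num)), wirt_uAux h₁ h₂ hW hW₀,
    norm_div, Complex.norm_real, Real.norm_eq_abs] at key
  rw [show -2 * uAux f₁ f₂ z = -(uAux f₁ f₂ z) - uAux f₁ f₂ z by ring, Real.exp_sub,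
    Real.exp_neg, hE.eq_of_nhds]
  have hV := sq_norm_add_sq_norm_pos_of_wr_ne_zero hW₀
  have hk := norm_pos_iff.2 hW₀
  have hL := lagrange_identity (f₁ z) (f₂ z) (deriv f₁ z) (deriv f₂ z)
  rw [abs_of_pos hV] at key
  field_simp at key ⊢
  rw [Wr]
  linear_combination -key + 4 * hL

theorem eq_neg_wirt_wirt_uAux_sub_sq (h₁ : AnalyticAt ℂ f₁ z) (h₂ : AnalyticAt ℂ f₂ z)
    (hW : ∀ᶠ w in 𝓝 z, Wr f₁ f₂ w = Wr f₁ f₂ z) (hW₀ : Wr f₁ f₂ z ≠ 0) {a : ℂ}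
    (ha₁ : deriv (deriv f₁) z + a * f₁ z = 0) (ha₂ : deriv (deriv f₂) z + a * f₂ z = 0) :
    a = -wirt (wirt fun w => (uAux f₁ f₂ w : ℂ)) z
      - wirt (fun w => (uAux f₁ f₂ w : ℂ)) z ^ 2 := by
  have hE := cexp_uAux_eventuallyEq hW hW₀
  have hP : wirt (fun w => (starRingEnd ℂ (f₁ w) * f₁ w + starRingEnd ℂ (f₂ w) * f₂ w)
      / (‖Wr f₁ f₂ z‖ : ℂ)) =ᶠ[𝓝 z] fun w =>
      (starRingEnd ℂ (f₁ w) * deriv f₁ w + starRingEnd ℂ (f₂ w) * deriv f₂ w)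
        / (‖Wr f₁ f₂ z‖ : ℂ) :=
    (h₁.eventually_analyticAt.and h₂.eventually_analyticAt).mono fun w hw =>
      wirt_conj_mul_add_conj_mul_div hw.1.differentiableAt hw.1.differentiableAt
        hw.2.differentiableAt hw.2.differentiableAt _
  have key := wirt_wirt_cexp_comp (g := fun w => (uAux f₁ f₂ w : ℂ))
    (Complex.ofRealCLM.contDiff.contDiffAt.comp z (contDiffAt_uAux h₁ h₂ hW hW₀))
  rw [hE.wirt.wirt.eq_of_nhds, hP.wirt.eq_of_nhds, hE.eq_of_nhds,
    wirt_conj_mul_add_conj_mul_div h₁.differentiableAt h₁.deriv.differentiableAt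
      h₂.differentiableAt h₂.deriv.differentiableAt] at key
  have hV : starRingEnd ℂ (f₁ z) * f₁ z + starRingEnd ℂ (f₂ z) * f₂ z ≠ 0 := by
    rw [Complex.conj_mul', Complex.conj_mul']
    exact_mod_cast (sq_norm_add_sq_norm_pos_of_wr_ne_zero hW₀).ne'
  have hk : (‖Wr f₁ f₂ z‖ : ℂ) ≠ 0 := Complex.ofReal_ne_zero.2 (norm_ne_zero_iff.2 hW₀)
  rw [eq_neg_of_add_eq_zero_left ha₁, eq_neg_of_add_eq_zero_left ha₂] at key
  field_simp at key
  apply mul_left_cancel₀ hV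
  linear_combination -key

end Local

theorem stmt5_general (A f₁ f₂ : ℂ → ℂ)
    (hf₁ : IsSolution A f₁) (hf₂ : IsSolution A f₂) (hli : LinIndep f₁ f₂) :
    (∀ z ∈ oDisc, lapl (uAux f₁ f₂) z = 4 * Real.exp (-2 * uAux f₁ f₂ z)) ∧
    (∀ z ∈ oDisc,
      lapl (uAux f₁ f₂) z + gradSq (uAux f₁ f₂) z
        = Real.exp (-(uAux f₁ f₂ z)) * lapl (fun w => Real.exp (uAux f₁ f₂ w)) z) ∧
    (∀ z ∈ oDisc,
      A z = - wirt (wirt (fun w => ((uAux f₁ f₂ w : ℝ) : ℂ))) z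
              - (wirt (fun w => ((uAux f₁ f₂ w : ℝ) : ℂ)) z) ^ 2) := by
  obtain ⟨z₀, hz₀, hW₀⟩ := hli.exists_wr_ne_zero hf₁.1 hf₂.1
  have hlocal : ∀ z ∈ oDisc, AnalyticAt ℂ f₁ z ∧ AnalyticAt ℂ f₂ z ∧
      (∀ᶠ w in 𝓝 z, Wr f₁ f₂ w = Wr f₁ f₂ z) ∧ Wr f₁ f₂ z ≠ 0 := fun z hz =>
    ⟨hf₁.analyticOnNhd z hz, hf₂.analyticOnNhd z hz,
      (isOpen_oDisc.eventually_mem hz).mono fun w hw =>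
        (hf₁.wr_eq_wr_zero hf₂ hw).trans (hf₁.wr_eq_wr_zero hf₂ hz).symm,
      by rwa [hf₁.wr_eq_wr_zero hf₂ hz, ← hf₁.wr_eq_wr_zero hf₂ hz₀]⟩
  refine ⟨fun z hz => ?_, fun z hz => ?_, fun z hz => ?_⟩ <;>
    obtain ⟨h₁, h₂, hW, hW₀⟩ := hlocal z hz
  · exact lapl_uAux h₁ h₂ hW hW₀
  · rw [lapl_exp_comp (contDiffAt_uAux h₁ h₂ hW hW₀), ← mul_assoc, ← Real.exp_add,
      neg_add_cancel, Real.exp_zero, one_mul]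
  · exact eq_neg_wirt_wirt_uAux_sub_sq h₁ h₂ hW hW₀ (hf₁.2 z hz) (hf₂.2 z hz)

/-- identities for u = -log (f₁/f₂)^#. -/
theorem stmt5 (A f₁ f₂ : ℂ → ℂ) (hA : DifferentiableOn ℂ A oDisc)
    (hf₁ : IsSolution A f₁) (hf₂ : IsSolution A f₂) (hli : LinIndep f₁ f₂) :
    (∀ z ∈ oDisc, lapl (uAux f₁ f₂) z = 4 * Real.exp (-2 * uAux f₁ f₂ z)) ∧
    (∀ z ∈ oDisc,
      lapl (uAux f₁ f₂) z + gradSq (uAux f₁ f₂) z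
        = Real.exp (-(uAux f₁ f₂ z)) * lapl (fun w => Real.exp (uAux f₁ f₂ w)) z) ∧
    (∀ z ∈ oDisc,
      A z = - wirt (wirt (fun w => ((uAux f₁ f₂ w : ℝ) : ℂ))) z
              - (wirt (fun w => ((uAux f₁ f₂ w : ℝ) : ℂ)) z) ^ 2) :=
  stmt5_general A f₁ f₂ hf₁ hf₂ hli

end
end
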